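/- Let P be a finite poset with k points and height h (the maximal size of a chain in P is h, with h ≥ 1). Then d(P) ≤ 2^{k−h}·(h+1), and equality holds if and only if P is isomorphic to A_{k−h} + C_h, the disjoint sum of a (k−h)-element antichain and an h-element chain. -/

import Mathlib

open scoped Classical

variable {α : Type*} [DecidableEq α]

/-- `q` is a partial order relation with ground set `S`: it is a set of pairs
contained in `S × S`, reflexive on `S`, transitive and antisymmetric. -/
def IsPOon (S : Finset α) (q : Finset (α × α)) : Prop :=
  q ⊆ S ×ˢ S ∧ (∀ x ∈ S, (x, x) ∈ q) ∧
  (∀ x y z : α, (x, y) ∈ q → (y, z) ∈ q → (x, z) ∈ q) ∧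
  (∀ x y : α, (x, y) ∈ q → (y, x) ∈ q → x = y)

/-- The relation induced on a subset `A` of the ground set. -/
def restrictRel (q : Finset (α × α)) (A : Finset α) : Finset (α × α) :=
  q.filter fun r => r.1 ∈ A ∧ r.2 ∈ A

/-- The downsets of the poset `(S, q)`. -/
noncomputable def downsets (S : Finset α) (q : Finset (α × α)) : Finset (Finset α) :=
  S.powerset.filter fun D => ∀ y ∈ D, ∀ x : α, (x, y) ∈ q → x ∈ D

/-- `d(P)`, the number of downsets of the poset `(S, q)`. -/
noncomputable def dnum (S : Finset α) (q : Finset (α × α)) : ℕ :=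
  (downsets S q).card

/-- The upsets of the poset `(S, q)`. -/
noncomputable def upsets (S : Finset α) (q : Finset (α × α)) : Finset (Finset α) :=
  S.powerset.filter fun U => ∀ x ∈ U, ∀ y : α, (x, y) ∈ q → y ∈ U

/-- Down-closure `QA = {x : x ≤_Q a for some a ∈ A}`. -/
def dcl (q : Finset (α × α)) (A : Finset α) : Finset α :=
  (q.filter fun r => r.2 ∈ A).image Prod.fst

/-- Up-closure `AQ = {y : a ≤_Q y for some a ∈ A}`. -/
def ucl (q : Finset (α × α)) (A : Finset α) : Finset α :=
  (q.filter fun r => r.1 ∈ A).image Prod.snd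

/-- The set of minimal elements of the poset `(S, q)`. -/
noncomputable def minset (S : Finset α) (q : Finset (α × α)) : Finset α :=
  S.filter fun x => ∀ y : α, (y, x) ∈ q → y = x

/-- `E(M, P)`: the partial orders on `M ∪ K` inducing `p` on `K` whose set of
minimal elements is exactly `M`. -/
noncomputable def extPOs (M K : Finset α) (p : Finset (α × α)) :
    Finset (Finset (α × α)) :=
  ((M ∪ K) ×ˢ (M ∪ K)).powerset.filter fun q =>
    IsPOon (M ∪ K) q ∧ restrictRel q K = p ∧ minset (M ∪ K) q = M

/-- `A` is an antichain of the poset `(S, q)`. -/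
def isAntichain (S : Finset α) (q : Finset (α × α)) (A : Finset α) : Prop :=
  A ⊆ S ∧ ∀ x ∈ A, ∀ y ∈ A, (x, y) ∈ q → x = y

/-- The posets `(S, q)` and `(T, r)` are order-isomorphic. -/
def POIso {β : Type*} (S : Finset α) (q : Finset (α × α))
    (T : Finset β) (r : Finset (β × β)) : Prop :=
  ∃ f : α → β, Set.BijOn f ↑S ↑T ∧ ∀ x ∈ S, ∀ y ∈ S, ((x, y) ∈ q ↔ (f x, f y) ∈ r)

/-- `C` is a chain of the poset `(S, q)`. -/
def isChainOn (S : Finset α) (q : Finset (α × α)) (C : Finset α) : Prop :=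
  C ⊆ S ∧ ∀ x ∈ C, ∀ y ∈ C, (x, y) ∈ q ∨ (y, x) ∈ q

/-- The height of the poset `(S, q)`: the maximal size of a chain. -/
noncomputable def heightP (S : Finset α) (q : Finset (α × α)) : ℕ :=
  (S.powerset.filter (isChainOn S q)).sup Finset.card

/-! Fix a chain `C` of maximal size `h`. A downset `D` is determined by the pair
`(D \ C, D ∩ C)`, an arbitrary subset of the `k - h` points off the chain together with
one of the `h + 1` downsets of the chain, which gives the bound. If the bound is attained,
every such pair comes from a downset; taking `(∅, C)` and `({y}, ∅)` shows that no point
off `C` lies below a point of `C` and that points off `C` have nothing strictly below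
them, so all strict relations live inside `C` and `P ≅ A_{k-h} + C_h`. -/

open Finset

def StrictPairsIn (q : Finset (α × α)) (C : Finset α) : Prop :=
  ∀ x y : α, (x, y) ∈ q → x ≠ y → x ∈ C ∧ y ∈ C

lemma mem_restrictRel {q : Finset (α × α)} {A : Finset α} {x y : α} :
    (x, y) ∈ restrictRel q A ↔ (x, y) ∈ q ∧ x ∈ A ∧ y ∈ A := by
  simp [restrictRel]

omit [DecidableEq α] in
lemma mem_downsets {S D : Finset α} {q : Finset (α × α)} :
    D ∈ downsets S q ↔ D ⊆ S ∧ ∀ y ∈ D, ∀ x : α, (x, y) ∈ q → x ∈ D := by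
  simp [downsets]

lemma IsPOon.restrictRel {S A : Finset α} {q : Finset (α × α)} (hq : IsPOon S q)
    (hA : A ⊆ S) : IsPOon A (restrictRel q A) := by
  refine ⟨fun r hr => ?_, fun x hx => ?_, fun x y z hxy hyz => ?_, fun x y hxy hyx => ?_⟩
  · obtain ⟨x, y⟩ := r
    exact mem_product.2 (mem_restrictRel.1 hr).2
  · exact mem_restrictRel.2 ⟨hq.2.1 x (hA hx), hx, hx⟩
  · rw [mem_restrictRel] at hxy hyz ⊢
    exact ⟨hq.2.2.1 x y z hxy.1 hyz.1, hxy.2.1, hyz.2.2⟩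
  · exact hq.2.2.2 x y (mem_restrictRel.1 hxy).1 (mem_restrictRel.1 hyx).1

lemma isChainOn.restrictRel {S C : Finset α} {q : Finset (α × α)} (hC : isChainOn S q C) :
    isChainOn C (restrictRel q C) C := by
  refine ⟨subset_refl C, fun x hx y hy => ?_⟩
  simp only [mem_restrictRel, hx, hy, and_true]
  exact hC.2 x hx y hy

omit [DecidableEq α] in
lemma exists_isChainOn_card_eq_heightP (S : Finset α) (q : Finset (α × α)) :
    ∃ C, isChainOn S q C ∧ C.card = heightP S q := by
  have hne : (S.powerset.filter (isChainOn S q)).Nonempty :=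
    ⟨∅, mem_filter.2 ⟨empty_mem_powerset S, empty_subset S, by simp⟩⟩
  obtain ⟨C, hC, hCsup⟩ := exists_mem_eq_sup _ hne card
  exact ⟨C, (mem_filter.1 hC).2, hCsup.symm⟩

section ChainRank

variable {C : Finset α} {p : Finset (α × α)}

/-- The position of `c` in the chain `(C, p)`, counted from `1`. -/
noncomputable def chainRank (p : Finset (α × α)) (C : Finset α) (c : α) : ℕ :=
  (C.filter fun y => (y, c) ∈ p).card

lemma one_le_chainRank (hp : IsPOon C p) {c : α} (hc : c ∈ C) : 1 ≤ chainRank p C c :=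
  card_pos.2 ⟨c, mem_filter.2 ⟨hc, hp.2.1 c hc⟩⟩

lemma chainRank_le_card {c : α} : chainRank p C c ≤ C.card :=
  card_le_card (filter_subset _ _)

lemma chainRank_lt_chainRank (hp : IsPOon C p) {x y : α} (hy : y ∈ C) (hxy : (x, y) ∈ p)
    (hne : x ≠ y) : chainRank p C x < chainRank p C y := by
  refine card_lt_card ((ssubset_iff_of_subset fun z hz => ?_).2 ⟨y, ?_, fun hy' => ?_⟩)
  · rw [mem_filter] at hz ⊢
    exact ⟨hz.1, hp.2.2.1 z x y hz.2 hxy⟩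
  · exact mem_filter.2 ⟨hy, hp.2.1 y hy⟩
  · exact hne (hp.2.2.2 x y hxy (mem_filter.1 hy').2)

variable (hp : IsPOon C p) (htot : isChainOn C p C)
include hp htot

lemma mem_iff_chainRank_le {x y : α} (hx : x ∈ C) (hy : y ∈ C) :
    (x, y) ∈ p ↔ chainRank p C x ≤ chainRank p C y := by
  refine ⟨fun hxy => ?_, fun hle => ?_⟩
  · rcases eq_or_ne x y with rfl | hne
    · exact le_rfl
    · exact (chainRank_lt_chainRank hp hy hxy hne).le
  · rcases eq_or_ne x y with rfl | hne
    · exact hp.2.1 x hx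
    · exact (htot.2 x hx y hy).resolve_right fun hyx =>
        (chainRank_lt_chainRank hp hx hyx hne.symm).not_ge hle

lemma chainRank_injOn : Set.InjOn (chainRank p C) C := fun x hx y hy hxy =>
  hp.2.2.2 x y ((mem_iff_chainRank_le hp htot hx hy).2 hxy.le)
    ((mem_iff_chainRank_le hp htot hy hx).2 hxy.ge)

lemma image_chainRank : C.image (chainRank p C) = Icc 1 C.card := by
  refine eq_of_subset_of_card_le (fun i hi => ?_) ?_
  · obtain ⟨c, hc, rfl⟩ := mem_image.1 hi
    exact mem_Icc.2 ⟨one_le_chainRank hp hc, chainRank_le_card⟩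
  · rw [card_image_of_injOn (chainRank_injOn hp htot), Nat.card_Icc, Nat.add_sub_cancel]

lemma card_filter_chainRank_le {j : ℕ} (hj : j ≤ C.card) :
    (C.filter fun c => chainRank p C c ≤ j).card = j := by
  rw [← card_image_of_injOn ((chainRank_injOn hp htot).mono (filter_subset _ C)),
    ← filter_image (p := (· ≤ j)), image_chainRank hp htot]
  have : (Icc 1 C.card).filter (· ≤ j) = Icc 1 j := by
    ext i
    simp only [mem_filter, mem_Icc]
    omega
  rw [this, Nat.card_Icc, Nat.add_sub_cancel]

omit hp in
lemma subset_or_subset_of_mem_downsets {D E : Finset α} (hD : D ∈ downsets C p)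
    (hE : E ∈ downsets C p) : D ⊆ E ∨ E ⊆ D := by
  by_contra! hDE
  obtain ⟨x, hxD, hxE⟩ := not_subset.1 hDE.1
  obtain ⟨y, hyE, hyD⟩ := not_subset.1 hDE.2
  rcases htot.2 x ((mem_downsets.1 hD).1 hxD) y ((mem_downsets.1 hE).1 hyE) with h | h
  · exact hxE ((mem_downsets.1 hE).2 y hyE x h)
  · exact hyD ((mem_downsets.1 hD).2 x hxD y h)

lemma dnum_of_isChainOn : dnum C p = C.card + 1 := by
  refine le_antisymm ?_ ?_
  · -- downsets of a chain are nested, so they are determined by their size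
    refine (card_le_card_of_injOn card (t := range (C.card + 1)) (fun D hD => ?_)
      fun D hD E hE hDE => ?_).trans (card_range _).le
    · exact mem_range.2 (Nat.lt_succ_of_le (card_le_card (mem_downsets.1 hD).1))
    · rcases subset_or_subset_of_mem_downsets htot hD hE with h | h
      · exact eq_of_subset_of_card_le h hDE.ge
      · exact (eq_of_subset_of_card_le h hDE.le).symm
  · refine (card_range _).ge.trans (card_le_card_of_injOn
      (fun j => C.filter fun c => chainRank p C c ≤ j) (fun j _ => ?_) fun i hi j hj hij => ?_)
    · refine mem_downsets.2 ⟨filter_subset _ _, fun y hy x hxy => ?_⟩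
      have hxC : x ∈ C := (mem_product.1 (hp.1 hxy)).1
      rw [mem_filter] at hy ⊢
      exact ⟨hxC, ((mem_iff_chainRank_le hp htot hxC hy.1).1 hxy).trans hy.2⟩
    · rw [coe_range, Set.mem_Iio] at hi hj
      rw [← card_filter_chainRank_le hp htot (Nat.le_of_lt_succ hi),
        ← card_filter_chainRank_le hp htot (Nat.le_of_lt_succ hj)]
      exact congrArg card hij

end ChainRank

section Split

variable {S C : Finset α} {q : Finset (α × α)}

lemma sdiff_inter_mem_downsets {D : Finset α} (hD : D ∈ downsets S q) :
    (D \ C, D ∩ C) ∈ (S \ C).powerset ×ˢ downsets C (restrictRel q C) := by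
  obtain ⟨hDS, hDdown⟩ := mem_downsets.1 hD
  refine mem_product.2 ⟨mem_powerset.2 (sdiff_subset_sdiff hDS subset_rfl),
    mem_downsets.2 ⟨inter_subset_right, fun y hy x hxy => ?_⟩⟩
  rw [mem_inter] at hy ⊢
  exact ⟨hDdown y hy.1 x (mem_restrictRel.1 hxy).1, (mem_restrictRel.1 hxy).2.1⟩

lemma dnum_le_two_pow_mul_dnum_restrictRel (S C : Finset α) (q : Finset (α × α)) :
    dnum S q ≤ 2 ^ (S \ C).card * dnum C (restrictRel q C) := by
  rw [← card_powerset, dnum, dnum, ← card_product]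
  exact card_le_card_of_injOn (fun D => (D \ C, D ∩ C))
    (fun D hD => sdiff_inter_mem_downsets hD) fun D _ E _ hDE => by
      rw [← sdiff_union_inter D C, ← sdiff_union_inter E C, (Prod.mk.inj hDE).1,
        (Prod.mk.inj hDE).2]

lemma union_mem_downsets (hCS : C ⊆ S) (hcross : StrictPairsIn q C) {X I : Finset α}
    (hX : X ⊆ S \ C) (hI : I ∈ downsets C (restrictRel q C)) : X ∪ I ∈ downsets S q := by
  obtain ⟨hIC, hIdown⟩ := mem_downsets.1 hI
  refine mem_downsets.2 ⟨union_subset (hX.trans sdiff_subset) (hIC.trans hCS),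
    fun y hy x hxy => ?_⟩
  rcases eq_or_ne x y with rfl | hne
  · exact hy
  obtain ⟨hxC, hyC⟩ := hcross x y hxy hne
  have hyI : y ∈ I := (mem_union.1 hy).resolve_left fun hyX => (mem_sdiff.1 (hX hyX)).2 hyC
  exact mem_union_right _ (hIdown y hyI x (mem_restrictRel.2 ⟨hxy, hxC, hyC⟩))

lemma dnum_eq_of_strictPairsIn (hCS : C ⊆ S) (hcross : StrictPairsIn q C) :
    dnum S q = 2 ^ (S \ C).card * dnum C (restrictRel q C) := by
  rw [← card_powerset, dnum, dnum, ← card_product]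
  refine card_nbij' (fun D => (D \ C, D ∩ C)) (fun XI => XI.1 ∪ XI.2)
    (fun D hD => sdiff_inter_mem_downsets hD) (fun XI hXI => ?_)
    (fun D _ => sdiff_union_inter D C) (fun XI hXI => ?_)
  · obtain ⟨hX, hI⟩ := mem_product.1 hXI
    exact union_mem_downsets hCS hcross (mem_powerset.1 hX) hI
  · obtain ⟨hX, hI⟩ := mem_product.1 hXI
    have hXC : Disjoint XI.1 C := disjoint_of_subset_left (mem_powerset.1 hX) sdiff_disjoint
    have hIC : XI.2 ⊆ C := (mem_downsets.1 hI).1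
    simp only [union_sdiff_distrib, hXC.sdiff_eq_left, sdiff_eq_empty_iff_subset.2 hIC,
      union_empty, union_inter_distrib_right, disjoint_iff_inter_eq_empty.1 hXC,
      inter_eq_left.2 hIC, empty_union]

lemma union_mem_downsets_of_dnum_eq (heq : dnum S q = 2 ^ (S \ C).card * dnum C (restrictRel q C))
    {X I : Finset α} (hX : X ⊆ S \ C) (hI : I ∈ downsets C (restrictRel q C)) :
    X ∪ I ∈ downsets S q := by
  -- the injection `D ↦ (D \ C, D ∩ C)` has full image, so `(X, I)` is hit
  have himage : (downsets S q).image (fun D => (D \ C, D ∩ C)) =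
      (S \ C).powerset ×ˢ downsets C (restrictRel q C) := by
    refine eq_of_subset_of_card_le (image_subset_iff.2 fun D hD => sdiff_inter_mem_downsets hD) ?_
    unfold dnum at heq
    rw [card_product, card_powerset, ← heq]
    exact (card_image_of_injective _ fun D E hDE => by
      rw [← sdiff_union_inter D C, ← sdiff_union_inter E C, (Prod.mk.inj hDE).1,
        (Prod.mk.inj hDE).2]).ge
  have hXI : (X, I) ∈ (S \ C).powerset ×ˢ downsets C (restrictRel q C) :=
    mem_product.2 ⟨mem_powerset.2 hX, hI⟩
  obtain ⟨D, hD, hDXI⟩ := mem_image.1 (himage ▸ hXI)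
  rwa [← (Prod.mk.inj hDXI).1, ← (Prod.mk.inj hDXI).2, sdiff_union_inter]

lemma strictPairsIn_of_dnum_eq (hqS : q ⊆ S ×ˢ S)
    (heq : dnum S q = 2 ^ (S \ C).card * dnum C (restrictRel q C)) : StrictPairsIn q C := by
  intro x y hxy hne
  have hyC : y ∈ C := by
    by_contra hyC
    have hy : {y} ∪ ∅ ∈ downsets S q := union_mem_downsets_of_dnum_eq heq
      (singleton_subset_iff.2 (mem_sdiff.2 ⟨(mem_product.1 (hqS hxy)).2, hyC⟩))
      (mem_downsets.2 ⟨empty_subset _, by simp⟩)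
    exact hne (mem_singleton.1 ((mem_downsets.1 hy).2 y (by simp) x hxy))
  have hC : ∅ ∪ C ∈ downsets S q := union_mem_downsets_of_dnum_eq heq (empty_subset _)
    (mem_downsets.2 ⟨subset_rfl, fun y _ x hxy => (mem_restrictRel.1 hxy).2.1⟩)
  rw [empty_union] at hC
  exact ⟨(mem_downsets.1 hC).2 y hyC x hxy, hyC⟩

end Split

section AntichainAddChain

/-- `A_{k-h} + C_h` on `{0, …, k-1}`: the points `k-h, …, k-1` form a chain in their
natural order, the others are isolated. -/
def antichainAddChain (k h : ℕ) : Finset (ℕ × ℕ) :=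
  ((Finset.range k).image fun i => (i, i)) ∪
    (((Finset.range k \ Finset.range (k - h)) ×ˢ
        (Finset.range k \ Finset.range (k - h))).filter
      fun r => r.1 ≤ r.2)

lemma mem_antichainAddChain {k h a b : ℕ} :
    (a, b) ∈ antichainAddChain k h ↔ a = b ∧ a < k ∨ k - h ≤ a ∧ a ≤ b ∧ b < k := by
  simp only [antichainAddChain, mem_union, mem_image, mem_filter, mem_product, mem_sdiff,
    mem_range, Prod.mk.injEq]
  constructor
  · rintro (⟨i, hi, rfl, rfl⟩ | ⟨⟨⟨-, ha⟩, hb, -⟩, hab⟩)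
    · exact Or.inl ⟨rfl, hi⟩
    · exact Or.inr ⟨by omega, hab, hb⟩
  · rintro (⟨rfl, ha⟩ | ⟨ha, hab, hb⟩)
    · exact Or.inl ⟨a, ha, rfl, rfl⟩
    · exact Or.inr ⟨⟨⟨by omega, by omega⟩, hb, by omega⟩, hab⟩

variable {S C : Finset α} {q : Finset (α × α)}

omit [DecidableEq α] in
lemma poIso_antichainAddChain_of_bijOn (hq : IsPOon S q) (hcross : StrictPairsIn q C)
    {k h : ℕ} {f : α → ℕ} (hf : Set.BijOn f S (range k))
    (hfC : ∀ x ∈ S, x ∈ C ↔ k - h ≤ f x)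
    (hfle : ∀ x ∈ C, ∀ y ∈ C, (x, y) ∈ q ↔ f x ≤ f y) :
    POIso S q (range k) (antichainAddChain k h) := by
  refine ⟨f, hf, fun x hx y hy => ?_⟩
  have hfy : f y < k := mem_range.1 (hf.mapsTo hy)
  rw [mem_antichainAddChain]
  constructor
  · intro hxy
    rcases eq_or_ne x y with rfl | hne
    · exact Or.inl ⟨rfl, hfy⟩
    · obtain ⟨hxC, hyC⟩ := hcross x y hxy hne
      exact Or.inr ⟨(hfC x hx).1 hxC, (hfle x hxC y hyC).1 hxy, hfy⟩
  · rintro (⟨hfxy, -⟩ | ⟨hkx, hle, -⟩)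
    · rw [hf.injOn hx hy hfxy]
      exact hq.2.1 y hy
    · exact (hfle x ((hfC x hx).2 hkx) y ((hfC y hy).2 (hkx.trans hle))).2 hle

/-- Lay out `S \ C` on `{0, …, k-h-1}` arbitrarily and the chain `C` on `{k-h, …, k-1}`
by rank. -/
lemma exists_bijOn_range_of_isChainOn (hq : IsPOon S q) (hC : isChainOn S q C) :
    ∃ f : α → ℕ, Set.BijOn f S (range S.card) ∧
      (∀ x ∈ S, x ∈ C ↔ S.card - C.card ≤ f x) ∧ ∀ x ∈ C, ∀ y ∈ C, (x, y) ∈ q ↔ f x ≤ f y := by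
  set r := chainRank (restrictRel q C) C
  have hr {x : α} (hx : x ∈ C) : 1 ≤ r x ∧ r x ≤ C.card :=
    ⟨one_le_chainRank (hq.restrictRel hC.1) hx, chainRank_le_card⟩
  have hCS : C.card ≤ S.card := card_le_card hC.1
  obtain ⟨g, hg⟩ : ∃ g : α → ℕ, Set.BijOn g ↑(S \ C) ↑(range (S.card - C.card)) :=
    (S \ C).finite_toSet.exists_bijOn_of_encard_eq (by
      simp only [Set.encard_coe_eq_coe_finsetCard, card_range, card_sdiff_of_subset hC.1])
  set f : α → ℕ := fun x => if x ∈ C then S.card - C.card + (r x - 1) else g x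
  have hfC {x : α} (hx : x ∈ C) : f x = S.card - C.card + (r x - 1) := if_pos hx
  have hfA {x : α} (hx : x ∈ S \ C) : f x = g x ∧ g x < S.card - C.card :=
    ⟨if_neg (mem_sdiff.1 hx).2, mem_range.1 (hg.mapsTo hx)⟩
  have hmem {x : α} (hx : x ∈ S) : x ∈ C ∨ x ∈ S \ C := by
    by_cases hxC : x ∈ C
    exacts [Or.inl hxC, Or.inr (mem_sdiff.2 ⟨hx, hxC⟩)]
  have hmaps : Set.MapsTo f S (range S.card) := fun x hx => by
    rw [coe_range, Set.mem_Iio]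
    rcases hmem hx with hxC | hxA
    · have := hr hxC; rw [hfC hxC]; omega
    · have := hfA hxA; rw [this.1]; omega
  have hinj : Set.InjOn f S := fun x hx y hy hxy => by
    rcases hmem hx with hxC | hxA <;> rcases hmem hy with hyC | hyA
    · have := hr hxC; have := hr hyC; rw [hfC hxC, hfC hyC] at hxy
      exact chainRank_injOn (hq.restrictRel hC.1) hC.restrictRel hxC hyC (show r x = r y by omega)
    · have := hr hxC; have := hfA hyA; rw [hfC hxC, this.1] at hxy; omega
    · have := hr hyC; have := hfA hxA; rw [hfC hyC, this.1] at hxy; omega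
    · rw [(hfA hxA).1, (hfA hyA).1] at hxy
      exact hg.injOn hxA hyA hxy
  refine ⟨f, ⟨hmaps, hinj, surjOn_of_injOn_of_card_le f hmaps hinj (card_range _).le⟩,
    fun x hx => ?_, fun x hx y hy => ?_⟩
  · rcases hmem hx with hxC | hxA
    · have := hr hxC; simp only [hxC, true_iff, hfC hxC]; omega
    · have := hfA hxA; simp only [(mem_sdiff.1 hxA).2, false_iff, this.1]; omega
  · have hle : (x, y) ∈ restrictRel q C ↔ r x ≤ r y :=
      mem_iff_chainRank_le (hq.restrictRel hC.1) hC.restrictRel hx hy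
    simp only [mem_restrictRel, hx, hy, and_true] at hle
    have := hr hx; have := hr hy
    rw [hle, hfC hx, hfC hy]
    omega

lemma poIso_antichainAddChain (hq : IsPOon S q) (hC : isChainOn S q C)
    (hcross : StrictPairsIn q C) :
    POIso S q (range S.card) (antichainAddChain S.card C.card) := by
  obtain ⟨f, hf, hfC, hfle⟩ := exists_bijOn_range_of_isChainOn hq hC
  exact poIso_antichainAddChain_of_bijOn hq hcross hf hfC hfle

omit [DecidableEq α] in
lemma exists_isChainOn_of_poIso (hqS : q ⊆ S ×ˢ S) {k h : ℕ} (hk : S.card = k) (hhk : h ≤ k)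
    (hiso : POIso S q (range k) (antichainAddChain k h)) :
    ∃ C, isChainOn S q C ∧ StrictPairsIn q C ∧ C.card = h := by
  obtain ⟨f, hf, hrel⟩ := hiso
  have hfk {x : α} (hx : x ∈ S) : f x < k := mem_range.1 (hf.mapsTo hx)
  refine ⟨S.filter fun x => k - h ≤ f x, ⟨filter_subset _ _, fun x hx y hy => ?_⟩,
    fun x y hxy hne => ?_, ?_⟩
  · rw [mem_filter] at hx hy
    rw [hrel x hx.1 y hy.1, hrel y hy.1 x hx.1, mem_antichainAddChain, mem_antichainAddChain]
    have := hfk hx.1; have := hfk hy.1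
    omega
  · obtain ⟨hx, hy⟩ := mem_product.1 (hqS hxy)
    have hfne : f x ≠ f y := fun h => hne (hf.injOn hx hy h)
    have := (hrel x hx y hy).1 hxy
    rw [mem_antichainAddChain] at this
    simp only [mem_filter, hx, hy, true_and]
    omega
  · rw [← card_image_of_injOn (hf.injOn.mono (coe_subset.2 (filter_subset _ _))),
      ← filter_image (p := (k - h ≤ ·)),
      (image_eq_iff_bijOn_of_card (by rw [card_range, hk])).2 hf]
    have : (range k).filter (k - h ≤ ·) = Ico (k - h) k := by
      ext i
      simp only [mem_filter, mem_range, mem_Ico]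
      omega
    rw [this, Nat.card_Ico]
    omega

end AntichainAddChain

theorem stmt_6_general (S : Finset α) (q : Finset (α × α)) (hq : IsPOon S q)
    (k h : ℕ) (hk : S.card = k) (hh : heightP S q = h) :
    dnum S q ≤ 2 ^ (k - h) * (h + 1) ∧
    (dnum S q = 2 ^ (k - h) * (h + 1) ↔
      POIso S q (Finset.range k)
        (((Finset.range k).image fun i => (i, i)) ∪
          (((Finset.range k \ Finset.range (k - h)) ×ˢ
              (Finset.range k \ Finset.range (k - h))).filter
            fun r => r.1 ≤ r.2))) := by
  obtain ⟨C, hC, hCh⟩ := exists_isChainOn_card_eq_heightP S q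
  rw [hh] at hCh
  have hhk : h ≤ k := hk ▸ hCh ▸ card_le_card hC.1
  have hsplit : 2 ^ (S \ C).card * dnum C (restrictRel q C) = 2 ^ (k - h) * (h + 1) := by
    rw [card_sdiff_of_subset hC.1, dnum_of_isChainOn (hq.restrictRel hC.1) hC.restrictRel, hk, hCh]
  refine ⟨hsplit ▸ dnum_le_two_pow_mul_dnum_restrictRel S C q, fun heq => ?_, fun hiso => ?_⟩
  · have hcross := strictPairsIn_of_dnum_eq hq.1 (heq.trans hsplit.symm)
    rw [← hk, ← hCh]
    exact poIso_antichainAddChain hq hC hcross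
  · obtain ⟨C', hC', hcross, hC'h⟩ := exists_isChainOn_of_poIso hq.1 hk hhk hiso
    rw [dnum_eq_of_strictPairsIn hC'.1 hcross, card_sdiff_of_subset hC'.1,
      dnum_of_isChainOn (hq.restrictRel hC'.1) hC'.restrictRel, hk, hC'h]

/-- Corollary 3.6: a poset with `k` points and height `h ≥ 1` has at most
`2^{k−h}·(h+1)` downsets, with equality iff it is isomorphic to `A_{k−h} + C_h`. -/
theorem stmt_6 (S : Finset α) (q : Finset (α × α)) (hq : IsPOon S q)
    (k h : ℕ) (hk : S.card = k) (hh : heightP S q = h) (hh1 : 1 ≤ h) :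
    dnum S q ≤ 2 ^ (k - h) * (h + 1) ∧
    (dnum S q = 2 ^ (k - h) * (h + 1) ↔
      POIso S q (Finset.range k)
        (((Finset.range k).image fun i => (i, i)) ∪
          (((Finset.range k \ Finset.range (k - h)) ×ˢ
              (Finset.range k \ Finset.range (k - h))).filter
            fun r => r.1 ≤ r.2))) :=
  stmt_6_general S q hq k h hk hh
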